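/- Fix 0 < s < 1 and ξ ∈ ℝ, and set f(θ) = arccos(s cos θ) for θ ∈ ℝ, with derivative f'(θ) = s sin θ / √(1 − s² cos² θ). Then there exists a constant C > 0 such that for all integers n ≥ 1 and all θ ∈ ℝ: |Tₙ(s cos(θ + ξ/n)) − [Tₙ(s cos θ) cos(ξ f'(θ)) − sin(n f(θ)) sin(ξ f'(θ))]| ≤ C/n and |U_{n−1}(s cos(θ + ξ/n)) − [U_{n−1}(s cos θ) cos(ξ f'(θ)) + Tₙ(s cos θ) sin(ξ f'(θ))/sin f(θ)]| ≤ C/n. -/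

import Mathlib

/-- `f(θ) = arccos(s cos θ)`. -/
noncomputable def qwPhase (s θ : ℝ) : ℝ := Real.arccos (s * Real.cos θ)

/-- The derivative `f'(θ) = s sin θ / √(1 − s² cos² θ)` of `f`. -/
noncomputable def qwPhaseDeriv (s θ : ℝ) : ℝ :=
  s * Real.sin θ / Real.sqrt (1 - s ^ 2 * Real.cos θ ^ 2)

/-!
Write `f = qwPhase s`. Then `Tₙ(s cos φ) = cos (n f(φ))` and
`U_{n-1}(s cos φ) = sin (n f(φ)) / sin f(φ)`, and by the addition formulas the two bracketed
approximations are `cos β` and `sin β / sin f(θ)` with `β = n f(θ) + ξ f'(θ)`. Since `f` is smooth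
and `2π`-periodic, `f'` and `f''` are bounded, so Taylor's theorem gives
`n f(θ + ξ/n) = β + O(1/n)` and `f(θ + ξ/n) = f(θ) + O(1/n)` uniformly in `θ`; the lower bound
`sin f ≥ √(1 - s²)` controls the divisions.
-/

open Real Function Polynomial.Chebyshev

theorem Function.Periodic.exists_pos_abs_iteratedDeriv_le {f : ℝ → ℝ} {c : ℝ}
    (hp : Periodic f c) (hc : c ≠ 0) {k : ℕ} (hf : ContDiff ℝ k f) :
    ∃ M > 0, ∀ x, |iteratedDeriv k f x| ≤ M := by
  have hpk : Periodic (iteratedDeriv k f) c := fun x => by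
    simpa only [hp.funext] using (congrFun (iteratedDeriv_comp_add_const k f c) x).symm
  obtain ⟨M, hM0, hM⟩ :=
    (hpk.isBounded_of_continuous hc (hf.continuous_iteratedDeriv' k)).exists_pos_norm_le
  exact ⟨M, hM0, fun x => hM _ (Set.mem_range_self x)⟩

theorem abs_sub_sub_mul_deriv_le {f : ℝ → ℝ} {M : ℝ} (hf : ContDiff ℝ 2 f)
    (hM : ∀ t, |iteratedDeriv 2 f t| ≤ M) (x h : ℝ) :
    |f (x + h) - f x - h * deriv f x| ≤ M * h ^ 2 := by
  have hf' : Differentiable ℝ (deriv f) := by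
    simpa only [iteratedDeriv_one] using hf.differentiable_iteratedDeriv 1 (by norm_num)
  have hM' : ∀ t, ‖deriv (deriv f) t‖ ≤ M := by
    simpa only [iteratedDeriv_succ, iteratedDeriv_zero, Real.norm_eq_abs] using hM
  have hderiv : ∀ t ∈ Set.uIcc x (x + h), ‖deriv f t - deriv f x‖ ≤ M * |h| := fun t ht =>
    calc ‖deriv f t - deriv f x‖ ≤ M * ‖t - x‖ :=
          convex_univ.norm_image_sub_le_of_norm_deriv_le (fun u _ => hf'.differentiableAt)
            (fun u _ => hM' u) (Set.mem_univ x) (Set.mem_univ t)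
      _ ≤ M * |h| := by
          gcongr
          · exact (norm_nonneg _).trans (hM' x)
          · simpa using Set.abs_sub_left_of_mem_uIcc ht
  have := (convex_uIcc x (x + h)).norm_image_sub_le_of_norm_hasDerivWithin_le
    (f := fun t => f t - t * deriv f x) (fun t _ =>
      ((hf.differentiable (by norm_num) t).hasDerivAt.sub
        (hasDerivAt_mul_const (deriv f x))).hasDerivWithinAt) hderiv
    Set.left_mem_uIcc Set.right_mem_uIcc
  convert this using 1
  · rw [Real.norm_eq_abs]; congr 1; ring
  · rw [Real.norm_eq_abs, add_sub_cancel_left, mul_assoc, abs_mul_abs_self, sq]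
theorem Function.Periodic.exists_scaled_taylor_bound {f : ℝ → ℝ} {c : ℝ} (hp : Periodic f c)
    (hc : c ≠ 0) (hf : ContDiff ℝ 2 f) (ξ : ℝ) :
    ∃ A > 0, ∀ n : ℝ, 0 < n → ∀ x,
      |n * f (x + ξ / n) - (n * f x + ξ * deriv f x)| ≤ A / n ∧ |f (x + ξ / n) - f x| ≤ A / n := by
  obtain ⟨K, hK0, hK⟩ := hp.exists_pos_abs_iteratedDeriv_le hc (hf.of_le one_le_two) (k := 1)
  obtain ⟨M, hM0, hM⟩ := hp.exists_pos_abs_iteratedDeriv_le hc hf (k := 2)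
  rw [iteratedDeriv_one] at hK
  refine ⟨M * ξ ^ 2 + K * |ξ| + 1, by positivity, fun n hn x => ⟨?_, ?_⟩⟩
  · calc |n * f (x + ξ / n) - (n * f x + ξ * deriv f x)|
        = n * |f (x + ξ / n) - f x - ξ / n * deriv f x| := by
          rw [← abs_of_pos hn, ← abs_mul, abs_of_pos hn]; congr 1; field_simp; ring
      _ ≤ n * (M * (ξ / n) ^ 2) := by gcongr; exact abs_sub_sub_mul_deriv_le hf hM x (ξ / n)
      _ = M * ξ ^ 2 / n := by field_simp
      _ ≤ _ := by gcongr; linarith [mul_nonneg hK0.le (abs_nonneg ξ)]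
  · calc |f (x + ξ / n) - f x| ≤ K * |x + ξ / n - x| :=
          convex_univ.norm_image_sub_le_of_norm_deriv_le
            (fun t _ => (hf.differentiable two_ne_zero).differentiableAt) (fun t _ => hK t)
            (Set.mem_univ x) (Set.mem_univ _)
      _ = K * |ξ| / n := by rw [add_sub_cancel_left, abs_div, abs_of_pos hn, mul_div_assoc]
      _ ≤ _ := by gcongr; linarith [mul_nonneg hM0.le (sq_nonneg ξ)]

namespace qwPhase

variable {s : ℝ}

theorem periodic (s : ℝ) : Periodic (qwPhase s) (2 * π) := fun θ => by
  simp only [qwPhase, cos_add_two_pi]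

theorem mul_cos_ne_neg_one_and_ne_one (hs : |s| < 1) (θ : ℝ) :
    s * cos θ ≠ -1 ∧ s * cos θ ≠ 1 := by
  have : |s * cos θ| < 1 := by
    rw [abs_mul]
    exact (mul_le_of_le_one_right (abs_nonneg s) (abs_cos_le_one θ)).trans_lt hs
  constructor <;> rintro h <;> simp [h] at this

theorem contDiff (hs : |s| < 1) {n : WithTop ℕ∞} : ContDiff ℝ n (qwPhase s) :=
  contDiff_iff_contDiffAt.2 fun θ =>
    (contDiffAt_arccos (mul_cos_ne_neg_one_and_ne_one hs θ).1
      (mul_cos_ne_neg_one_and_ne_one hs θ).2).comp θ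
        (contDiffAt_const.mul contDiff_cos.contDiffAt)

theorem hasDerivAt (hs : |s| < 1) (θ : ℝ) : HasDerivAt (qwPhase s) (qwPhaseDeriv s θ) θ := by
  obtain ⟨h₁, h₂⟩ := mul_cos_ne_neg_one_and_ne_one hs θ
  refine ((hasDerivAt_arccos h₁ h₂).comp θ ((hasDerivAt_cos θ).const_mul s)).congr_deriv ?_
  rw [qwPhaseDeriv, mul_pow]
  ring

theorem deriv_eq (hs : |s| < 1) : deriv (qwPhase s) = qwPhaseDeriv s :=
  funext fun θ => (hasDerivAt hs θ).deriv

theorem cos_eq (hs : |s| ≤ 1) (θ : ℝ) : cos (qwPhase s θ) = s * cos θ := by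
  have : |s * cos θ| ≤ 1 := by
    rw [abs_mul]; exact mul_le_one₀ hs (abs_nonneg _) (abs_cos_le_one θ)
  exact cos_arccos (abs_le.1 this).1 (abs_le.1 this).2

theorem sqrt_one_sub_sq_le_sin (s θ : ℝ) : √(1 - s ^ 2) ≤ sin (qwPhase s θ) := by
  rw [qwPhase, sin_arccos]
  apply sqrt_le_sqrt
  nlinarith [cos_sq_le_one θ, sq_nonneg s, mul_pow s (cos θ) 2]

theorem T_eval_mul_cos (hs : |s| ≤ 1) (n : ℤ) (θ : ℝ) :
    (T ℝ n).eval (s * cos θ) = cos (n * qwPhase s θ) := by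
  rw [← cos_eq hs, T_real_cos]

theorem U_eval_mul_cos (hs : |s| < 1) (n : ℤ) (θ : ℝ) :
    (U ℝ (n - 1)).eval (s * cos θ) = sin (n * qwPhase s θ) / sin (qwPhase s θ) := by
  have hsin : 0 < sin (qwPhase s θ) :=
    (sqrt_pos.2 (by nlinarith [abs_nonneg s, sq_abs s])).trans_le (sqrt_one_sub_sq_le_sin s θ)
  rw [eq_div_iff hsin.ne', ← cos_eq hs.le, U_real_cos]
  push_cast; ring_nf

end qwPhase

theorem abs_div_sub_div_le {x y p q c : ℝ} (hc : 0 < c) (hp : c ≤ p) (hq : c ≤ q)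
    (hy : |y| ≤ 1) : |x / p - y / q| ≤ |x - y| / c + |q - p| / c ^ 2 := by
  have hp0 := hc.trans_le hp
  have hq0 := hc.trans_le hq
  have hsplit : x / p - y / q = (x - y) / p + y * (q - p) / (p * q) := by
    field_simp; ring
  rw [hsplit]
  refine (abs_add_le _ _).trans (add_le_add ?_ ?_)
  · rw [abs_div, abs_of_pos hp0]
    gcongr
  · rw [abs_div, abs_mul, abs_of_pos (mul_pos hp0 hq0), sq]
    calc |y| * |q - p| / (p * q) ≤ 1 * |q - p| / (p * q) := by gcongr
      _ ≤ |q - p| / (c * c) := by rw [one_mul]; gcongr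

theorem chebyshev_taylor_asymptotics (s : ℝ) (hs0 : 0 < s) (hs1 : s < 1) (ξ : ℝ) :
    ∃ C > 0, ∀ n : ℕ, 1 ≤ n → ∀ θ : ℝ,
      |(Polynomial.Chebyshev.T ℝ (n : ℤ)).eval (s * Real.cos (θ + ξ / n)) -
          ((Polynomial.Chebyshev.T ℝ (n : ℤ)).eval (s * Real.cos θ) *
              Real.cos (ξ * qwPhaseDeriv s θ) -
            Real.sin (n * qwPhase s θ) * Real.sin (ξ * qwPhaseDeriv s θ))| ≤ C / n ∧
      |(Polynomial.Chebyshev.U ℝ ((n : ℤ) - 1)).eval (s * Real.cos (θ + ξ / n)) -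
          ((Polynomial.Chebyshev.U ℝ ((n : ℤ) - 1)).eval (s * Real.cos θ) *
              Real.cos (ξ * qwPhaseDeriv s θ) +
            (Polynomial.Chebyshev.T ℝ (n : ℤ)).eval (s * Real.cos θ) *
              (Real.sin (ξ * qwPhaseDeriv s θ) / Real.sin (qwPhase s θ)))| ≤ C / n := by
  have hs : |s| < 1 := abs_lt.2 ⟨by linarith, hs1⟩
  obtain ⟨A, hA0, hA⟩ := (qwPhase.periodic s).exists_scaled_taylor_bound two_pi_pos.ne'
    (qwPhase.contDiff hs) ξ
  rw [qwPhase.deriv_eq hs] at hA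
  set c := √(1 - s ^ 2)
  have hc : 0 < c := sqrt_pos.2 (by nlinarith)
  refine ⟨A + (A / c + A / c ^ 2), by positivity, fun n hn θ => ?_⟩
  obtain ⟨hphase, hshift⟩ := hA n (by exact_mod_cast hn) θ
  set a := qwPhase s θ
  set a' := qwPhase s (θ + ξ / n)
  set β := n * a + ξ * qwPhaseDeriv s θ
  rw [qwPhase.T_eval_mul_cos hs.le, qwPhase.T_eval_mul_cos hs.le, qwPhase.U_eval_mul_cos hs,
    qwPhase.U_eval_mul_cos hs]
  push_cast
  constructor
  · rw [← cos_add]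
    calc |cos (n * a') - cos β| ≤ A / n := (abs_cos_sub_cos_le _ _).trans hphase
      _ ≤ _ := by gcongr ?_ / _; exact le_add_of_nonneg_right (by positivity)
  · rw [show sin (n * a) / sin a * cos (ξ * qwPhaseDeriv s θ) +
        cos (n * a) * (sin (ξ * qwPhaseDeriv s θ) / sin a) = sin β / sin a by
      rw [sin_add]; ring]
    calc _ ≤ |sin (n * a') - sin β| / c + |sin a - sin a'| / c ^ 2 :=
          abs_div_sub_div_le hc (qwPhase.sqrt_one_sub_sq_le_sin s _)
            (qwPhase.sqrt_one_sub_sq_le_sin s _) (abs_sin_le_one β)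
      _ ≤ A / n / c + A / n / c ^ 2 := by
          gcongr
          · exact (abs_sin_sub_sin_le _ _).trans hphase
          · exact (abs_sin_sub_sin_le _ _).trans (abs_sub_comm a a' ▸ hshift)
      _ = (A / c + A / c ^ 2) / n := by ring
      _ ≤ _ := by gcongr ?_ / _; exact le_add_of_nonneg_left hA0.le
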